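/- arXiv:1605.05281 — 6 statements merged into one kernel-verified Lean document; each statement's English description precedes it below -/
import Mathlib

section
/- Let x and y be integers with |y − x| = 3. Let S be a set of at least 8 distinct integer pairs such that every (c₁, c₂) ∈ S satisfies c₁ ≥ x, c₂ ≥ y and |c₁ − c₂| ≤ 3. Then S contains at least two elements (c₁, c₂) with write sum (c₁ − x) + (c₂ − y) ≥ 4. -/
lemma card_six_le (a b c d e f : ℤ × ℤ) :
    ({a, b, c, d, e, f} : Finset (ℤ × ℤ)).card ≤ 6 := by
  refine le_trans (Finset.card_insert_le _ _) ?_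
  refine le_trans (Nat.add_le_add_right (Finset.card_insert_le _ _) 1) ?_
  refine le_trans (Nat.add_le_add_right (Nat.add_le_add_right (Finset.card_insert_le _ _) 1) 1) ?_
  refine le_trans (Nat.add_le_add_right (Nat.add_le_add_right (Nat.add_le_add_right (Finset.card_insert_le _ _) 1) 1) 1) ?_
  refine le_trans (Nat.add_le_add_right (Nat.add_le_add_right (Nat.add_le_add_right (Nat.add_le_add_right (Finset.card_insert_le _ _) 1) 1) 1) 1) ?_
  simp

/-- Lemma 1, stated combinatorially: if `|y - x| = 3` and `S` is a set of at
least 8 distinct integer pairs, each `(c₁, c₂) ∈ S` satisfying `c₁ ≥ x`,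
`c₂ ≥ y` and `|c₁ - c₂| ≤ 3`, then `S` contains at least two states of write
sum `(c₁ - x) + (c₂ - y) ≥ 4`. -/
theorem stmt_2 (x y : ℤ) (hxy : |y - x| = 3) (S : Finset (ℤ × ℤ))
    (hcard : 8 ≤ S.card)
    (hS : ∀ p ∈ S, x ≤ p.1 ∧ y ≤ p.2 ∧ |p.1 - p.2| ≤ 3) :
    2 ≤ (S.filter (fun p => 4 ≤ (p.1 - x) + (p.2 - y))).card := by
  have key : (S.filter (fun p => ¬ 4 ≤ (p.1 - x) + (p.2 - y))).card ≤ 6 := by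
    rcases (abs_eq (by norm_num : (0:ℤ) ≤ 3)).mp hxy with h | h
    · refine le_trans (Finset.card_le_card (show _ ⊆
        ({(x,y),(x+1,y),(x+1,y+1),(x+2,y),(x+2,y+1),(x+3,y)} : Finset (ℤ × ℤ)) from ?_))
        (card_six_le _ _ _ _ _ _)
      intro p hp
      simp only [Finset.mem_filter, not_le] at hp
      obtain ⟨hpS, hsum⟩ := hp
      obtain ⟨h1, h2, h3⟩ := hS p hpS
      have h3' := abs_le.mp h3
      simp only [Finset.mem_insert, Finset.mem_singleton, Prod.ext_iff]
      omega
    · refine le_trans (Finset.card_le_card (show _ ⊆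
        ({(x,y),(x,y+1),(x+1,y+1),(x,y+2),(x+1,y+2),(x,y+3)} : Finset (ℤ × ℤ)) from ?_))
        (card_six_le _ _ _ _ _ _)
      intro p hp
      simp only [Finset.mem_filter, not_le] at hp
      obtain ⟨hpS, hsum⟩ := hp
      obtain ⟨h1, h2, h3⟩ := hS p hpS
      have h3' := abs_le.mp h3
      simp only [Finset.mem_insert, Finset.mem_singleton, Prod.ext_iff]
      omega
  have := Finset.card_filter_add_card_filter_not
    (s := S) (p := fun p => 4 ≤ (p.1 - x) + (p.2 - y))
  omega
end

section
/- Let x and y be integers with |y − x| = 2. Let S be a set of at least 8 distinct integer pairs such that every (c₁, c₂) ∈ S satisfies c₁ ≥ x, c₂ ≥ y and |c₁ − c₂| ≤ 3. Then S contains at least three elements with write sum (c₁ − x) + (c₂ − y) ≥ 3, at least one of which satisfies |c₁ − c₂| = 3 or has write sum at least 4. -/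
/-- Lemma 2, stated combinatorially: if `|y - x| = 2` and `S` is a set of at
least 8 distinct integer pairs, each `(c₁, c₂) ∈ S` satisfying `c₁ ≥ x`,
`c₂ ≥ y` and `|c₁ - c₂| ≤ 3`, then `S` contains at least three states of write
sum `≥ 3`, at least one of which has `|c₁ - c₂| = 3` or write sum `≥ 4`. -/
theorem stmt_3 (x y : ℤ) (hxy : |y - x| = 2) (S : Finset (ℤ × ℤ))
    (hcard : 8 ≤ S.card)
    (hS : ∀ p ∈ S, x ≤ p.1 ∧ y ≤ p.2 ∧ |p.1 - p.2| ≤ 3) :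
    3 ≤ (S.filter (fun p => 3 ≤ (p.1 - x) + (p.2 - y))).card ∧
    ∃ p ∈ S, 3 ≤ (p.1 - x) + (p.2 - y) ∧
      (|p.1 - p.2| = 3 ∨ 4 ≤ (p.1 - x) + (p.2 - y)) := by
  have hxy' : y - x = 2 ∨ y - x = -2 := (abs_eq (by norm_num)).mp hxy
  -- the five possible states of write sum ≤ 2
  set B2 : Finset (ℤ × ℤ) :=
    {(x, y), (x+1, y), (x+2, y), (x, y+1), (x+1, y+1), (x, y+2)} with hB2
  -- the above plus the "bad" states of write sum 3
  set B3 : Finset (ℤ × ℤ) :=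
    {(x, y), (x+1, y), (x+2, y), (x, y+1), (x+1, y+1), (x, y+2),
      (x+3, y), (x+2, y+1), (x+1, y+2), (x, y+3)} with hB3
  have hB2card : B2.card ≤ 6 := by
    refine (Finset.card_insert_le _ _).trans (Nat.succ_le_succ ?_)
    refine (Finset.card_insert_le _ _).trans (Nat.succ_le_succ ?_)
    refine (Finset.card_insert_le _ _).trans (Nat.succ_le_succ ?_)
    refine (Finset.card_insert_le _ _).trans (Nat.succ_le_succ ?_)
    exact Finset.card_insert_le _ _
  constructor
  · -- at most 5 elements of S have write sum ≤ 2 (they lie in B2 minus one point)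
    have hsub : S.filter (fun p => ¬ 3 ≤ (p.1 - x) + (p.2 - y)) ⊆
        B2.filter (fun p => |p.1 - p.2| ≤ 3) := by
      intro p hp
      simp only [Finset.mem_filter] at hp ⊢
      obtain ⟨hpS, hw⟩ := hp
      obtain ⟨h1, h2, h3⟩ := hS p hpS
      have h3' := abs_le.mp h3
      obtain ⟨h3a, h3b⟩ := h3'
      refine ⟨?_, h3⟩
      simp only [hB2, Finset.mem_insert, Finset.mem_singleton, Prod.ext_iff]
      omega
    have h5 : (B2.filter (fun p => |p.1 - p.2| ≤ 3)).card ≤ 5 := by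
      have hss : B2.filter (fun p => |p.1 - p.2| ≤ 3) ⊆ B2 := Finset.filter_subset _ _
      rcases hxy' with h | h
      · -- y = x + 2 : the point (x, y+2) is excluded since |x - (y+2)| = 4
        have hmem : (x, y+2) ∈ B2 := by
          simp [hB2]
        have hnot : (x, y+2) ∉ B2.filter (fun p => |p.1 - p.2| ≤ 3) := by
          simp only [Finset.mem_filter]
          rintro ⟨-, habs⟩
          rw [abs_le] at habs
          omega
        have := Finset.card_lt_card (Finset.ssubset_iff_of_subset hss |>.mpr ⟨_, hmem, hnot⟩)
        omega
      · -- y = x - 2 : the point (x+2, y) is excluded since |(x+2) - y| = 4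
        have hmem : (x+2, y) ∈ B2 := by
          simp [hB2]
        have hnot : (x+2, y) ∉ B2.filter (fun p => |p.1 - p.2| ≤ 3) := by
          simp only [Finset.mem_filter]
          rintro ⟨-, habs⟩
          rw [abs_le] at habs
          omega
        have := Finset.card_lt_card (Finset.ssubset_iff_of_subset hss |>.mpr ⟨_, hmem, hnot⟩)
        omega
    have hle : (S.filter (fun p => ¬ 3 ≤ (p.1 - x) + (p.2 - y))).card ≤ 5 :=
      (Finset.card_le_card hsub).trans h5
    have heq := Finset.card_filter_add_card_filter_not
      (s := S) (p := fun p => 3 ≤ (p.1 - x) + (p.2 - y))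
    omega
  · -- existence of a good state
    by_contra hcon
    push_neg at hcon
    have key : ∀ p ∈ S, x ≤ p.1 ∧ y ≤ p.2 ∧ -3 ≤ p.1 - p.2 ∧ p.1 - p.2 ≤ 3 ∧
        (3 ≤ (p.1 - x) + (p.2 - y) →
          p.1 - p.2 ≠ 3 ∧ p.1 - p.2 ≠ -3 ∧ (p.1 - x) + (p.2 - y) < 4) := by
      intro p hpS
      obtain ⟨h1, h2, h3⟩ := hS p hpS
      obtain ⟨h3a, h3b⟩ := abs_le.mp h3
      refine ⟨h1, h2, h3a, h3b, fun hw => ?_⟩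
      obtain ⟨hne1, hne2⟩ := hcon p hpS hw
      refine ⟨?_, ?_, hne2⟩ <;> intro hd <;> apply hne1 <;> rw [hd] <;> norm_num
    rcases hxy' with h | h
    · -- y = x + 2
      have hsub : S ⊆ ({(x, y), (x+1, y), (x+2, y), (x, y+1), (x+1, y+1),
          (x+3, y), (x+2, y+1)} : Finset (ℤ × ℤ)) := by
        intro p hpS
        obtain ⟨h1, h2, h3a, h3b, hw⟩ := key p hpS
        simp only [Finset.mem_insert, Finset.mem_singleton, Prod.ext_iff]
        omega
      have h7 : ({(x, y), (x+1, y), (x+2, y), (x, y+1), (x+1, y+1),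
          (x+3, y), (x+2, y+1)} : Finset (ℤ × ℤ)).card ≤ 7 := by
        refine (Finset.card_insert_le _ _).trans (Nat.succ_le_succ ?_)
        refine (Finset.card_insert_le _ _).trans (Nat.succ_le_succ ?_)
        refine (Finset.card_insert_le _ _).trans (Nat.succ_le_succ ?_)
        refine (Finset.card_insert_le _ _).trans (Nat.succ_le_succ ?_)
        refine (Finset.card_insert_le _ _).trans (Nat.succ_le_succ ?_)
        exact Finset.card_insert_le _ _
      have := Finset.card_le_card hsub
      omega
    · -- y = x - 2
      have hsub : S ⊆ ({(x, y), (x+1, y), (x, y+1), (x+1, y+1), (x, y+2),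
          (x, y+3), (x+1, y+2)} : Finset (ℤ × ℤ)) := by
        intro p hpS
        obtain ⟨h1, h2, h3a, h3b, hw⟩ := key p hpS
        simp only [Finset.mem_insert, Finset.mem_singleton, Prod.ext_iff]
        omega
      have h7 : ({(x, y), (x+1, y), (x, y+1), (x+1, y+1), (x, y+2),
          (x, y+3), (x+1, y+2)} : Finset (ℤ × ℤ)).card ≤ 7 := by
        refine (Finset.card_insert_le _ _).trans (Nat.succ_le_succ ?_)
        refine (Finset.card_insert_le _ _).trans (Nat.succ_le_succ ?_)
        refine (Finset.card_insert_le _ _).trans (Nat.succ_le_succ ?_)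
        refine (Finset.card_insert_le _ _).trans (Nat.succ_le_succ ?_)
        refine (Finset.card_insert_le _ _).trans (Nat.succ_le_succ ?_)
        exact Finset.card_insert_le _ _
      have := Finset.card_le_card hsub
      omega
end

section
/- Let x and y be integers with |y − x| = 1. Let S be a set of at least 8 distinct integer pairs such that every (c₁, c₂) ∈ S satisfies c₁ ≥ x, c₂ ≥ y and |c₁ − c₂| ≤ 3. Then S contains at least two elements with write sum (c₁ − x) + (c₂ − y) ≥ 3, at least one of which satisfies |c₁ − c₂| = 2 or has write sum at least 4. -/
/-- Lemma 3, stated combinatorially: if `|y - x| = 1` and `S` is a set of at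
least 8 distinct integer pairs, each `(c₁, c₂) ∈ S` satisfying `c₁ ≥ x`,
`c₂ ≥ y` and `|c₁ - c₂| ≤ 3`, then `S` contains at least two states of write
sum `≥ 3`, at least one of which has `|c₁ - c₂| = 2` or write sum `≥ 4`. -/
theorem stmt_4 (x y : ℤ) (hxy : |y - x| = 1) (S : Finset (ℤ × ℤ))
    (hcard : 8 ≤ S.card)
    (hS : ∀ p ∈ S, x ≤ p.1 ∧ y ≤ p.2 ∧ |p.1 - p.2| ≤ 3) :
    2 ≤ (S.filter (fun p => 3 ≤ (p.1 - x) + (p.2 - y))).card ∧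
    ∃ p ∈ S, 3 ≤ (p.1 - x) + (p.2 - y) ∧
      (|p.1 - p.2| = 2 ∨ 4 ≤ (p.1 - x) + (p.2 - y)) := by
  have hxy' : y - x = 1 ∨ y - x = -1 := (abs_eq (by norm_num)).mp hxy
  set f : ℤ × ℤ → ℤ × ℤ := fun p => (p.1 - x, p.2 - y) with hf
  have hinj : Function.Injective f := by
    intro a b hab
    simp only [hf, Prod.ext_iff] at hab ⊢
    omega
  constructor
  · have hsub : (S.filter (fun p => ¬ 3 ≤ (p.1 - x) + (p.2 - y))).image f ⊆
        ({(0,0),(1,0),(0,1),(2,0),(1,1),(0,2)} : Finset (ℤ × ℤ)) := by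
      intro q hq
      simp only [Finset.mem_image, Finset.mem_filter] at hq
      obtain ⟨p, ⟨hpS, hps⟩, rfl⟩ := hq
      obtain ⟨h1, h2, h3⟩ := hS p hpS
      simp only [hf, Finset.mem_insert, Finset.mem_singleton, Prod.mk.injEq]
      omega
    have h6 : (S.filter (fun p => ¬ 3 ≤ (p.1 - x) + (p.2 - y))).card ≤ 6 := by
      rw [← Finset.card_image_of_injective _ hinj]
      exact le_trans (Finset.card_le_card hsub) (by decide)
    have hsplit := Finset.card_filter_add_card_filter_not
      (s := S) (p := fun p => 3 ≤ (p.1 - x) + (p.2 - y))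
    omega
  · by_contra h
    push_neg at h
    rcases hxy' with hcase | hcase
    · have hsub : S.image f ⊆
          ({(0,0),(1,0),(0,1),(2,0),(1,1),(0,2),(2,1)} : Finset (ℤ × ℤ)) := by
        intro q hq
        simp only [Finset.mem_image] at hq
        obtain ⟨p, hpS, rfl⟩ := hq
        obtain ⟨h1, h2, h3⟩ := hS p hpS
        have h3' := abs_le.mp h3
        have hb := h p hpS
        simp only [hf, Finset.mem_insert, Finset.mem_singleton, Prod.mk.injEq]
        by_cases hsum : 3 ≤ (p.1 - x) + (p.2 - y)
        · obtain ⟨hne, h4⟩ := hb hsum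
          have hne2 : p.1 - p.2 ≠ 2 ∧ p.1 - p.2 ≠ -2 := by
            constructor <;> intro e <;> apply hne <;> rw [e] <;> norm_num
          omega
        · omega
      have hle := le_trans (Finset.card_le_card hsub)
        (by decide : ({(0,0),(1,0),(0,1),(2,0),(1,1),(0,2),(2,1)} : Finset (ℤ × ℤ)).card ≤ 7)
      rw [Finset.card_image_of_injective _ hinj] at hle
      omega
    · have hsub : S.image f ⊆
          ({(0,0),(1,0),(0,1),(2,0),(1,1),(0,2),(1,2)} : Finset (ℤ × ℤ)) := by
        intro q hq
        simp only [Finset.mem_image] at hq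
        obtain ⟨p, hpS, rfl⟩ := hq
        obtain ⟨h1, h2, h3⟩ := hS p hpS
        have h3' := abs_le.mp h3
        have hb := h p hpS
        simp only [hf, Finset.mem_insert, Finset.mem_singleton, Prod.mk.injEq]
        by_cases hsum : 3 ≤ (p.1 - x) + (p.2 - y)
        · obtain ⟨hne, h4⟩ := hb hsum
          have hne2 : p.1 - p.2 ≠ 2 ∧ p.1 - p.2 ≠ -2 := by
            constructor <;> intro e <;> apply hne <;> rw [e] <;> norm_num
          omega
        · omega
      have hle := le_trans (Finset.card_le_card hsub)
        (by decide : ({(0,0),(1,0),(0,1),(2,0),(1,1),(0,2),(1,2)} : Finset (ℤ × ℤ)).card ≤ 7)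
      rw [Finset.card_image_of_injective _ hinj] at hle
      omega
end

section
/- Let q ≥ 1 and t ≥ 0 be integers, and suppose there exist functions ψ : {0,…,q−1}² → {0,…,7} (decoding) and μ : {0,…,q−1}² × {0,…,7} → {0,…,q−1}² (update) such that for every message sequence (m₁,…,m_t) ∈ {0,…,7}^t, the state sequence defined by c⁰ = (0,0) and cⁱ = μ(cⁱ⁻¹, mᵢ) satisfies, for all 1 ≤ i ≤ t: cⁱ ≥ cⁱ⁻¹ componentwise, ψ(cⁱ) = mᵢ, and |c₁ⁱ − c₂ⁱ| ≤ 3. Then t ≤ ⌊3(q − 1)/5⌋. -/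
/-- The key predicate: relative position `(s,u)` above a state with imbalance `d`
that stays in the band and increases the potential by at most 4. -/
def Good (d s u : ℤ) : Prop :=
  |d + s - u| ≤ 3 ∧ s + u + max (d + s) u ≤ 4 + max d 0

instance (d s u : ℤ) : Decidable (Good d s u) := by
  unfold Good; infer_instance

lemma card7 (d : ℤ) (hd : |d| ≤ 3) :
    (Finset.univ.filter (fun su : Fin 8 × Fin 8 =>
      Good d su.1.val su.2.val)).card ≤ 7 := by
  rw [abs_le] at hd
  obtain ⟨h1, h2⟩ := hd
  interval_cases d <;> decide

/-- Key counting lemma: among 8 distinct points componentwise above `(a,b)` that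
stay in the band of imbalance 3, one has potential at least `Φ(a,b)+5`. -/
lemma key (a b : ℕ) (hab : |(a : ℤ) - b| ≤ 3) (p : Fin 8 → ℕ × ℕ)
    (hinj : Function.Injective p)
    (hge1 : ∀ m, a ≤ (p m).1) (hge2 : ∀ m, b ≤ (p m).2)
    (hband : ∀ m, |((p m).1 : ℤ) - ((p m).2 : ℤ)| ≤ 3) :
    ∃ m, a + b + max a b + 5 ≤ (p m).1 + (p m).2 + max (p m).1 (p m).2 := by
  by_contra hcon
  push_neg at hcon
  rw [abs_le] at hab
  -- each point gives a small offset
  have hbound : ∀ m : Fin 8, (p m).1 - a < 8 ∧ (p m).2 - b < 8 := by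
    intro m
    have h1 := hcon m
    have h2 := hge1 m
    have h3 := hge2 m
    rcases le_total (p m).1 (p m).2 with hxy | hxy <;>
      rcases le_total a b with hab' | hab' <;>
      [rw [max_eq_right hxy, max_eq_right hab'] at h1;
       rw [max_eq_right hxy, max_eq_left hab'] at h1;
       rw [max_eq_left hxy, max_eq_right hab'] at h1;
       rw [max_eq_left hxy, max_eq_left hab'] at h1] <;>
      omega
  let e : Fin 8 → Fin 8 × Fin 8 := fun m =>
    (⟨(p m).1 - a, (hbound m).1⟩, ⟨(p m).2 - b, (hbound m).2⟩)
  have hmem : ∀ m ∈ (Finset.univ : Finset (Fin 8)),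
      e m ∈ Finset.univ.filter (fun su : Fin 8 × Fin 8 =>
        Good ((a : ℤ) - b) su.1.val su.2.val) := by
    intro m _
    simp only [Finset.mem_filter, Finset.mem_univ, true_and]
    have h1 := hcon m
    have h2 := hge1 m
    have h3 := hge2 m
    have h4 := hband m
    rw [abs_le] at h4
    constructor
    · show |_| ≤ 3
      rw [abs_le]
      try simp only [e]
      constructor <;> push_cast <;> omega
    · show (_ : ℤ) + _ + max _ _ ≤ 4 + max ((a:ℤ) - b) 0
      try simp only [e]
      rcases le_total (p m).1 (p m).2 with hxy | hxy <;>
        rcases le_total a b with hab' | hab' <;>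
        [rw [max_eq_right hxy, max_eq_right hab'] at h1;
         rw [max_eq_right hxy, max_eq_left hab'] at h1;
         rw [max_eq_left hxy, max_eq_right hab'] at h1;
         rw [max_eq_left hxy, max_eq_left hab'] at h1]
      all_goals {
        have hmax1 : max ((a:ℤ) - b + ((p m).1 - a : ℕ)) (((p m).2 - b : ℕ) : ℤ)
            = (p m).1 - b ∨ max ((a:ℤ) - b + ((p m).1 - a : ℕ)) (((p m).2 - b : ℕ) : ℤ)
            = (p m).2 - b := by
          rcases max_choice ((a:ℤ) - b + ((p m).1 - a : ℕ)) (((p m).2 - b : ℕ) : ℤ)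
            with hc | hc <;> [left; right] <;> rw [hc] <;> push_cast <;> omega
        have hmax1a := le_max_left ((a:ℤ) - b + ((p m).1 - a : ℕ)) (((p m).2 - b : ℕ) : ℤ)
        have hmax1b := le_max_right ((a:ℤ) - b + ((p m).1 - a : ℕ)) (((p m).2 - b : ℕ) : ℤ)
        have hmax2 : max ((a:ℤ) - b) 0 = a - b ∨ max ((a:ℤ) - b) 0 = 0 :=
          max_choice _ _
        have hmax2a := le_max_left ((a:ℤ) - b) 0
        have hmax2b := le_max_right ((a:ℤ) - b) 0
        rcases hmax1 with hc1 | hc1 <;> rcases hmax2 with hc2 | hc2 <;>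
          rw [hc1, hc2] <;> rw [hc1] at hmax1a hmax1b <;>
          rw [hc2] at hmax2a hmax2b <;> push_cast <;> push_cast at hmax1a hmax1b <;>
          omega
      }
  have hinjOn : Set.InjOn e (Finset.univ : Finset (Fin 8)) := by
    intro m1 _ m2 _ hee
    simp only [e, Prod.mk.injEq, Fin.mk.injEq] at hee
    apply hinj
    have g1 := hge1 m1; have g2 := hge1 m2
    have g3 := hge2 m1; have g4 := hge2 m2
    have : (p m1).1 = (p m2).1 := by omega
    have : (p m1).2 = (p m2).2 := by omega
    exact Prod.ext ‹(p m1).1 = (p m2).1› ‹(p m1).2 = (p m2).2›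
  have hle := Finset.card_le_card_of_injOn e hmem hinjOn
  have h7 := card7 ((a : ℤ) - b) (by rw [abs_le]; omega)
  simp at hle
  omega

/-- Theorem 2: a 2-cell `q`-level `d = 3`-imbalance WOM code with input size
`M = 8` guaranteeing `t` writes satisfies `t ≤ ⌊3(q-1)/5⌋`.  The code is given
by a decoding function `ψ` and an update function `μ`; for every message
sequence, the state sequence starting at `(0,0)` and updated by `μ` must be
componentwise nondecreasing, decode correctly, and keep the two cell levels
within imbalance 3 after each write. -/
theorem stmt_6 (q t : ℕ) (hq : 1 ≤ q)
    (ψ : Fin q × Fin q → Fin 8)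
    (μ : Fin q × Fin q → Fin 8 → Fin q × Fin q)
    (h : ∀ m : ℕ → Fin 8, ∀ c : ℕ → Fin q × Fin q,
      c 0 = (⟨0, hq⟩, ⟨0, hq⟩) →
      (∀ i, c (i + 1) = μ (c i) (m i)) →
      ∀ i < t,
        ((c i).1 : ℕ) ≤ ((c (i + 1)).1 : ℕ) ∧
        ((c i).2 : ℕ) ≤ ((c (i + 1)).2 : ℕ) ∧
        ψ (c (i + 1)) = m i ∧
        |(((c (i + 1)).1 : ℕ) : ℤ) - (((c (i + 1)).2 : ℕ) : ℤ)| ≤ 3) :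
    t ≤ 3 * (q - 1) / 5 := by
  classical
  set Φ : Fin q × Fin q → ℕ :=
    fun c => (c.1 : ℕ) + (c.2 : ℕ) + max (c.1 : ℕ) (c.2 : ℕ) with hΦ
  set P : Fin q × Fin q → Fin 8 → Prop := fun c m => Φ c + 5 ≤ Φ (μ c m) with hP
  set g : Fin q × Fin q → Fin 8 :=
    fun c => if hx : ∃ m, P c m then hx.choose else 0 with hg
  set C : ℕ → Fin q × Fin q :=
    fun n => Nat.rec ((⟨0, hq⟩ : Fin q), (⟨0, hq⟩ : Fin q)) (fun _ p => μ p (g p)) n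
    with hCdef
  have hC0 : C 0 = (⟨0, hq⟩, ⟨0, hq⟩) := rfl
  have hCs : ∀ i, C (i + 1) = μ (C i) (g (C i)) := fun i => rfl
  -- properties of all possible successors of a reachable state
  have hall : ∀ i < t, ∀ m : Fin 8,
      ((C i).1 : ℕ) ≤ ((μ (C i) m).1 : ℕ) ∧
      ((C i).2 : ℕ) ≤ ((μ (C i) m).2 : ℕ) ∧
      ψ (μ (C i) m) = m ∧
      |(((μ (C i) m).1 : ℕ) : ℤ) - (((μ (C i) m).2 : ℕ) : ℤ)| ≤ 3 := by
    intro i hi m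
    set m' : ℕ → Fin 8 := fun j => if j = i then m else g (C j) with hm'
    set C' : ℕ → Fin q × Fin q :=
      fun n => Nat.rec ((⟨0, hq⟩ : Fin q), (⟨0, hq⟩ : Fin q))
        (fun j p => μ p (m' j)) n with hC'def
    have hC's : ∀ j, C' (j + 1) = μ (C' j) (m' j) := fun j => rfl
    have hC'eq : ∀ j ≤ i, C' j = C j := by
      intro j hj
      induction j with
      | zero => rfl
      | succ k ih =>
        have hk : k ≤ i := by omega
        have hki : k ≠ i := by omega
        rw [hC's, hCs, ih hk]
        congr 1
        simp [hm', hki]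
    have hspec := h m' C' rfl (fun j => rfl) i hi
    have h1 : C' i = C i := hC'eq i le_rfl
    have h2 : C' (i + 1) = μ (C i) m := by
      rw [hC's, h1]; congr 1; simp [hm']
    rw [h1, h2] at hspec
    have hm'i : m' i = m := by simp [hm']
    rw [hm'i] at hspec
    exact hspec
  -- the main invariant
  have main : ∀ i ≤ t, 5 * i ≤ Φ (C i) ∧
      |(((C i).1 : ℕ) : ℤ) - (((C i).2 : ℕ) : ℤ)| ≤ 3 := by
    intro i hi
    induction i with
    | zero => simp [hC0, hΦ]
    | succ k ih =>
      have hk : k < t := by omega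
      obtain ⟨ihΦ, ihband⟩ := ih (by omega)
      -- apply key lemma to the 8 candidate successors
      have hex : ∃ m, P (C k) m := by
        obtain ⟨m, hm⟩ := key ((C k).1 : ℕ) ((C k).2 : ℕ) ihband
          (fun m => (((μ (C k) m).1 : ℕ), ((μ (C k) m).2 : ℕ)))
          (by
            intro m1 m2 hee
            simp only [Prod.mk.injEq] at hee
            have e1 : μ (C k) m1 = μ (C k) m2 := by
              apply Prod.ext <;> apply Fin.ext <;> [exact hee.1; exact hee.2]
            have := (hall k hk m1).2.2.1
            rw [e1, (hall k hk m2).2.2.1] at this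
            exact this.symm)
          (fun m => (hall k hk m).1)
          (fun m => (hall k hk m).2.1)
          (fun m => (hall k hk m).2.2.2)
        exact ⟨m, hm⟩
      have hgood : P (C k) (g (C k)) := by
        rw [hg]; simp only; rw [dif_pos hex]; exact hex.choose_spec
      have hΦstep : Φ (C k) + 5 ≤ Φ (C (k + 1)) := by rw [hCs]; exact hgood
      constructor
      · omega
      · -- band at k+1 from the original sequence hypothesis
        have := h (fun j => g (C j)) C hC0 (fun j => rfl) k hk
        exact this.2.2.2
  -- conclude
  obtain ⟨hfin, _⟩ := main t le_rfl
  have hx : ((C t).1 : ℕ) < q := (C t).1.isLt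
  have hy : ((C t).2 : ℕ) < q := (C t).2.isLt
  have hΦle : Φ (C t) ≤ 3 * (q - 1) := by
    simp only [hΦ]
    rcases le_total ((C t).1 : ℕ) ((C t).2 : ℕ) with hc | hc <;>
      [rw [max_eq_right hc]; rw [max_eq_left hc]] <;> omega
  have : 5 * t ≤ 3 * (q - 1) := le_trans hfin hΦle
  omega
end

section
/- Let a > 2 and q be integers with q ≥ 1 + ⌈(a² − 2)(3a − 4)/(a − 2)⌉. Then ⌊3(q − 1)/(3a − 4)⌋ ≥ ⌊(q − 1)(a + 1)/(a² − 2)⌋ + 1. -/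
/-- Corollary: for `a > 2` and `q ≥ 1 + ⌈(a²-2)(3a-4)/(a-2)⌉`, the
`a`-imbalance construction guarantees strictly more writes than the best known
unconstrained 2-cell construction:
`⌊3(q-1)/(3a-4)⌋ ≥ ⌊(q-1)(a+1)/(a²-2)⌋ + 1`. -/
theorem stmt_7 (a q : ℤ) (ha : 2 < a)
    (hq : 1 + ⌈(((a : ℚ) ^ 2 - 2) * (3 * (a : ℚ) - 4)) / ((a : ℚ) - 2)⌉ ≤ q) :
    ⌊(((q : ℚ) - 1) * ((a : ℚ) + 1)) / ((a : ℚ) ^ 2 - 2)⌋ + 1 ≤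
      ⌊(3 * ((q : ℚ) - 1)) / (3 * (a : ℚ) - 4)⌋ := by
  have ha2 : (2:ℚ) < (a:ℚ) := by exact_mod_cast ha
  have h1 : (0:ℚ) < 3*(a:ℚ) - 4 := by linarith
  have h2 : (0:ℚ) < (a:ℚ)^2 - 2 := by nlinarith
  have h3 : (0:ℚ) < (a:ℚ) - 2 := by linarith
  have hq0 : (1:ℚ) + (⌈(((a : ℚ) ^ 2 - 2) * (3 * (a : ℚ) - 4)) / ((a : ℚ) - 2)⌉ : ℚ)
      ≤ (q:ℚ) := by exact_mod_cast hq
  have hq' : (((a:ℚ)^2 - 2)*(3*(a:ℚ)-4))/((a:ℚ)-2) ≤ (q:ℚ) - 1 := by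
    have := Int.le_ceil ((((a : ℚ) ^ 2 - 2) * (3 * (a : ℚ) - 4)) / ((a : ℚ) - 2))
    linarith
  have hq'' : ((a:ℚ)^2 - 2)*(3*(a:ℚ)-4) ≤ ((q:ℚ)-1)*((a:ℚ)-2) := by
    rwa [div_le_iff₀ h3] at hq'
  have key : (((q:ℚ)-1)*((a:ℚ)+1))/((a:ℚ)^2-2) + 1 ≤ (3*((q:ℚ)-1))/(3*(a:ℚ)-4) := by
    rw [div_add' _ _ _ (ne_of_gt h2), div_le_div_iff₀ h2 h1]
    nlinarith [hq'']
  calc ⌊(((q : ℚ) - 1) * ((a : ℚ) + 1)) / ((a : ℚ) ^ 2 - 2)⌋ + 1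
      = ⌊(((q : ℚ) - 1) * ((a : ℚ) + 1)) / ((a : ℚ) ^ 2 - 2) + 1⌋ :=
        (Int.floor_add_one _).symm
    _ ≤ ⌊(3 * ((q : ℚ) - 1)) / (3 * (a : ℚ) - 4)⌋ := Int.floor_le_floor key
end

section
/- Let a ≥ 3 be an integer. Define the frontier level sets L₀ = {0}, L₁ = {a − 2, a − 1}, L₂ = {2a − 4, 2a − 3, 2a − 2}, L₃ = {3a − 4}. Then for each i ∈ {1, 2, 3}, any two elements u, v ∈ L_{i−1} ∪ L_i satisfy |u − v| ≤ a. -/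
/-- The sets of cell levels appearing in the frontier states of the `i`-th
write of the `d = a`-imbalance code of Construction 1. -/
def frontierLevels (a : ℤ) : ℕ → Set ℤ
  | 0 => {0}
  | 1 => {a - 2, a - 1}
  | 2 => {2 * a - 4, 2 * a - 3, 2 * a - 2}
  | 3 => {3 * a - 4}
  | _ => ∅

/-- Proposition 1: for each `i ∈ {1, 2, 3}`, any two cell levels taken from
frontier states of writes `i - 1` and `i` differ by at most `a`. -/
theorem stmt_14 (a : ℤ) (ha : 3 ≤ a) :
    ∀ i ∈ ({1, 2, 3} : Set ℕ),
      ∀ u ∈ frontierLevels a (i - 1) ∪ frontierLevels a i,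
        ∀ v ∈ frontierLevels a (i - 1) ∪ frontierLevels a i,
          |u - v| ≤ a := by
  intro i hi u hu v hv
  rcases hi with rfl | rfl | rfl <;>
    simp only [frontierLevels, Set.mem_union, Set.mem_insert_iff,
      Set.mem_singleton_iff] at hu hv <;>
    rw [abs_le] <;> omega
end
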